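/- Strang-type abstract error estimate: let V be a Hilbert space, a a symmetric continuous (constant M) coercive (constant α) bilinear form on V, V_h ⊆ V a closed subspace, a_h a symmetric bilinear form on V_h satisfying α⋆ a(v,v) ≤ a_h(v,v) ≤ α* a(v,v) for all v ∈ V_h. Let w ∈ V solve a(w,v) = F(v) for all v ∈ V and w_h ∈ V_h solve a_h(w_h,v_h) = F_h(v_h) for all v_h ∈ V_h, where F, F_h are continuous linear functionals. Then for every w_I ∈ V_h, ‖w − w_h‖ ≤ C( ‖w − w_I‖ + sup_{v_h ∈ V_h, v_h ≠ 0} |a(w,v_h) − a_h(w_I,v_h)| / ‖v_h‖ + sup_{v_h ∈ V_h, v_h ≠ 0} |F(v_h) − F_h(v_h)| / ‖v_h‖ ), where C depends only on α, α⋆, α*, M. -/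

import Mathlib

/-!
Put `δ = w_h - w_I ∈ V_h`. Testing both problems with `δ` and using the two Galerkin
equations gives `a_h(δ, δ) = (a(w, δ) - a_h(w_I, δ)) - (F(δ) - F_h(δ))`, while stability of
`a_h` and coercivity of `a` give `α⋆ α ‖δ‖² ≤ a_h(δ, δ)`. Hence `‖δ‖` is bounded by the two
consistency terms divided by `α⋆ α`, and the triangle inequality `‖w - w_h‖ ≤ ‖w - w_I‖ + ‖δ‖`
finishes the proof with `C = 1 + 1 / (α⋆ α)`. The suprema really bound the consistency
terms because `a_h(w_I, ·)` is bounded on `V_h`, by Cauchy–Schwarz for the semidefinite form `a_h`.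
-/

open LinearMap (BilinForm)

section DualNorm

variable {V : Type*} [NormedAddCommGroup V] [Module ℝ V]

/-- Dual norm of `f` on `S`; it is `0` by convention when `f` is unbounded on `S`. -/
noncomputable def dualNormOn (S : Submodule ℝ V) (f : V → ℝ) : ℝ :=
  ⨆ v : {x : V // x ∈ S ∧ x ≠ 0}, |f v.1| / ‖v.1‖

variable {S : Submodule ℝ V} {f : V → ℝ}

lemma dualNormOn_nonneg : 0 ≤ dualNormOn S f :=
  Real.iSup_nonneg fun _ => by positivity

lemma abs_le_dualNormOn_mul_norm {K : ℝ} (hK : ∀ v ∈ S, |f v| ≤ K * ‖v‖) {v : V}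
    (hv : v ∈ S) : |f v| ≤ dualNormOn S f * ‖v‖ := by
  rcases eq_or_ne v 0 with rfl | hv0
  · simpa using hK 0 S.zero_mem
  have hbdd : BddAbove (Set.range fun u : {x : V // x ∈ S ∧ x ≠ 0} => |f u.1| / ‖u.1‖) := by
    refine ⟨K, Set.forall_mem_range.2 fun u => ?_⟩
    rw [div_le_iff₀ (norm_pos_iff.2 u.2.2)]
    exact hK u.1 u.2.1
  rw [← div_le_iff₀ (norm_pos_iff.2 hv0)]
  exact le_ciSup hbdd ⟨v, hv, hv0⟩

end DualNorm

lemma abs_apply_le_sqrt_mul_norm {V : Type*} [NormedAddCommGroup V] [Module ℝ V]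
    (B : BilinForm ℝ V) (S : Submodule ℝ V) (hsymm : ∀ u ∈ S, ∀ v ∈ S, B u v = B v u)
    (hnonneg : ∀ v ∈ S, 0 ≤ B v v) {c : ℝ} (hc : ∀ v ∈ S, B v v ≤ c * ‖v‖ ^ 2)
    {u : V} (hu : u ∈ S) {v : V} (hv : v ∈ S) :
    |B u v| ≤ √(B u u * c) * ‖v‖ := by
  have hcs : (B u v) ^ 2 ≤ B u u * B v v :=
    BilinForm.apply_sq_le_of_symm (B.domRestrict₁₂ S S) (fun x => hnonneg x x.2)
      (LinearMap.isSymm_def.2 fun x y => hsymm x x.2 y y.2) ⟨u, hu⟩ ⟨v, hv⟩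
  have hsq : (B u v) ^ 2 ≤ B u u * c * ‖v‖ ^ 2 := by
    rw [mul_assoc]
    exact hcs.trans (mul_le_mul_of_nonneg_left (hc v hv) (hnonneg u hu))
  calc |B u v| = √((B u v) ^ 2) := (Real.sqrt_sq_eq_abs _).symm
    _ ≤ √(B u u * c * ‖v‖ ^ 2) := Real.sqrt_le_sqrt hsq
    _ = √(B u u * c) * ‖v‖ := by
      rw [Real.sqrt_mul' _ (sq_nonneg _), Real.sqrt_sq (norm_nonneg _)]

lemma le_div_of_mul_sq_le_mul {β c x : ℝ} (hβ : 0 < β) (hc : 0 ≤ c) (hx : 0 ≤ x)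
    (h : β * x ^ 2 ≤ c * x) : x ≤ c / β := by
  rcases hx.eq_or_lt with rfl | hpos
  · exact div_nonneg hc hβ.le
  · rw [le_div_iff₀ hβ]
    nlinarith

theorem norm_sub_le_strang {V : Type*} [NormedAddCommGroup V] [NormedSpace ℝ V]
    {M α αlow αup : ℝ} (hα : 0 < α) (hαlow : 0 < αlow) (hαup : 0 < αup)
    (Vh : Submodule ℝ V) (a ah : BilinForm ℝ V)
    (ha_bdd : ∀ u v, |a u v| ≤ M * ‖u‖ * ‖v‖) (ha_coer : ∀ v, α * ‖v‖ ^ 2 ≤ a v v)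
    (hah_symm : ∀ u ∈ Vh, ∀ v ∈ Vh, ah u v = ah v u)
    (hah_equiv : ∀ v ∈ Vh, αlow * a v v ≤ ah v v ∧ ah v v ≤ αup * a v v)
    (F Fh : V →L[ℝ] ℝ) {w : V} (hw : ∀ v, a w v = F v)
    {wh : V} (hwh : wh ∈ Vh) (hwh_sol : ∀ vh ∈ Vh, ah wh vh = Fh vh)
    {wI : V} (hwI : wI ∈ Vh) :
    ‖w - wh‖ ≤ ‖w - wI‖ + (dualNormOn Vh (fun v => a w v - ah wI v)
      + dualNormOn Vh (fun v => F v - Fh v)) / (αlow * α) := by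
  set Sa := dualNormOn Vh fun v => a w v - ah wI v
  set SF := dualNormOn Vh fun v => F v - Fh v
  have ha_nonneg (v : V) : 0 ≤ a v v := (by positivity : 0 ≤ α * ‖v‖ ^ 2).trans (ha_coer v)
  have hah_nonneg (v : V) (hv : v ∈ Vh) : 0 ≤ ah v v :=
    (mul_nonneg hαlow.le (ha_nonneg v)).trans (hah_equiv v hv).1
  have hah_le (v : V) (hv : v ∈ Vh) : ah v v ≤ αup * M * ‖v‖ ^ 2 := by
    have ha_le : a v v ≤ M * ‖v‖ ^ 2 := by nlinarith [le_abs_self (a v v), ha_bdd v v]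
    nlinarith [(hah_equiv v hv).2]
  have hSa (v : V) (hv : v ∈ Vh) : |a w v - ah wI v| ≤ Sa * ‖v‖ := by
    refine abs_le_dualNormOn_mul_norm (f := fun v => a w v - ah wI v)
      (K := M * ‖w‖ + √(ah wI wI * (αup * M))) (fun u hu => ?_) hv
    calc |a w u - ah wI u| ≤ |a w u| + |ah wI u| := abs_sub _ _
      _ ≤ M * ‖w‖ * ‖u‖ + √(ah wI wI * (αup * M)) * ‖u‖ := by
        gcongr
        · exact ha_bdd w u
        · exact abs_apply_le_sqrt_mul_norm ah Vh hah_symm hah_nonneg hah_le hwI hu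
      _ = (M * ‖w‖ + √(ah wI wI * (αup * M))) * ‖u‖ := by ring
  have hSF (v : V) (hv : v ∈ Vh) : |F v - Fh v| ≤ SF * ‖v‖ :=
    abs_le_dualNormOn_mul_norm (f := fun v => F v - Fh v)
      (fun u _ => by simpa using (F - Fh).le_opNorm u) hv
  set δ := wh - wI
  have hδ : δ ∈ Vh := Vh.sub_mem hwh hwI
  have hconsistency : ah δ δ = (a w δ - ah wI δ) - (F δ - Fh δ) := by
    rw [show ah δ δ = ah wh δ - ah wI δ by simp [δ], hwh_sol δ hδ, hw δ]
    ring
  have hstab : αlow * α * ‖δ‖ ^ 2 ≤ (Sa + SF) * ‖δ‖ :=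
    calc αlow * α * ‖δ‖ ^ 2 = αlow * (α * ‖δ‖ ^ 2) := by ring
      _ ≤ αlow * a δ δ := by gcongr; exact ha_coer δ
      _ ≤ ah δ δ := (hah_equiv δ hδ).1
      _ = (a w δ - ah wI δ) - (F δ - Fh δ) := hconsistency
      _ ≤ |a w δ - ah wI δ| + |F δ - Fh δ| := by
        linarith [le_abs_self (a w δ - ah wI δ), neg_abs_le (F δ - Fh δ)]
      _ ≤ Sa * ‖δ‖ + SF * ‖δ‖ := add_le_add (hSa δ hδ) (hSF δ hδ)
      _ = (Sa + SF) * ‖δ‖ := by ring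
  have hδ_le : ‖δ‖ ≤ (Sa + SF) / (αlow * α) :=
    le_div_of_mul_sq_le_mul (by positivity)
      (add_nonneg dualNormOn_nonneg dualNormOn_nonneg) (norm_nonneg δ) hstab
  calc ‖w - wh‖ = ‖(w - wI) - δ‖ := by rw [sub_sub_sub_cancel_right]
    _ ≤ ‖w - wI‖ + ‖δ‖ := norm_sub_le _ _
    _ ≤ _ := by gcongr

theorem stmt4_general (M α αlow αup : ℝ)
    (hα : 0 < α) (hαlow : 0 < αlow) (hαup : 0 < αup) :
    ∃ C > 0, ∀ (V : Type) [NormedAddCommGroup V] [InnerProductSpace ℝ V]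
      [CompleteSpace V],
      ∀ (Vh : Submodule ℝ V), IsClosed (Vh : Set V) →
      ∀ (a ah : V →ₗ[ℝ] V →ₗ[ℝ] ℝ),
      (∀ u v, a u v = a v u) →
      (∀ u v, |a u v| ≤ M * ‖u‖ * ‖v‖) →
      (∀ v, α * ‖v‖ ^ 2 ≤ a v v) →
      (∀ u ∈ Vh, ∀ v ∈ Vh, ah u v = ah v u) →
      (∀ v ∈ Vh, αlow * a v v ≤ ah v v ∧ ah v v ≤ αup * a v v) →
      ∀ (F Fh : V →L[ℝ] ℝ) (w : V), (∀ v, a w v = F v) →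
      ∀ wh ∈ Vh, (∀ vh ∈ Vh, ah wh vh = Fh vh) →
      ∀ wI ∈ Vh,
        ‖w - wh‖ ≤ C * (‖w - wI‖
          + (⨆ vh : {x : V // x ∈ Vh ∧ x ≠ 0}, |a w vh.1 - ah wI vh.1| / ‖vh.1‖)
          + ⨆ vh : {x : V // x ∈ Vh ∧ x ≠ 0}, |F vh.1 - Fh vh.1| / ‖vh.1‖) := by
  refine ⟨1 + 1 / (αlow * α), by positivity, ?_⟩
  intro V _ _ _ Vh _ a ah _ ha_bdd ha_coer hah_symm hah_equiv F Fh w hw wh hwh hwh_sol wI hwI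
  have hstrang := norm_sub_le_strang hα hαlow hαup Vh a ah ha_bdd ha_coer hah_symm hah_equiv
    F Fh hw hwh hwh_sol hwI
  have hSa : 0 ≤ dualNormOn Vh (fun v => a w v - ah wI v) := dualNormOn_nonneg
  have hSF : 0 ≤ dualNormOn Vh (fun v => F v - Fh v) := dualNormOn_nonneg
  have hc : 0 ≤ 1 / (αlow * α) := by positivity
  change ‖w - wh‖ ≤ (1 + 1 / (αlow * α)) * (‖w - wI‖
    + dualNormOn Vh (fun v => a w v - ah wI v) + dualNormOn Vh (fun v => F v - Fh v))
  rw [div_eq_mul_one_div] at hstrang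
  nlinarith [norm_nonneg (w - wI)]

/-- Strang-type abstract error estimate (abstract version of Theorem 3.1). -/
theorem stmt4 (M α αlow αup : ℝ)
    (hM : 0 < M) (hα : 0 < α) (hαlow : 0 < αlow) (hαup : 0 < αup) :
    ∃ C > 0, ∀ (V : Type) [NormedAddCommGroup V] [InnerProductSpace ℝ V]
      [CompleteSpace V],
      ∀ (Vh : Submodule ℝ V), IsClosed (Vh : Set V) →
      ∀ (a ah : V →ₗ[ℝ] V →ₗ[ℝ] ℝ),
      (∀ u v, a u v = a v u) →
      (∀ u v, |a u v| ≤ M * ‖u‖ * ‖v‖) →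
      (∀ v, α * ‖v‖ ^ 2 ≤ a v v) →
      (∀ u ∈ Vh, ∀ v ∈ Vh, ah u v = ah v u) →
      (∀ v ∈ Vh, αlow * a v v ≤ ah v v ∧ ah v v ≤ αup * a v v) →
      ∀ (F Fh : V →L[ℝ] ℝ) (w : V), (∀ v, a w v = F v) →
      ∀ wh ∈ Vh, (∀ vh ∈ Vh, ah wh vh = Fh vh) →
      ∀ wI ∈ Vh,
        ‖w - wh‖ ≤ C * (‖w - wI‖
          + (⨆ vh : {x : V // x ∈ Vh ∧ x ≠ 0}, |a w vh.1 - ah wI vh.1| / ‖vh.1‖)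
          + ⨆ vh : {x : V // x ∈ Vh ∧ x ≠ 0}, |F vh.1 - Fh vh.1| / ‖vh.1‖) :=
  stmt4_general M α αlow αup hα hαlow hαup
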